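/- Let C ⊆ ℝ^d be a compact domain with nonempty interior and C² topological boundary ∂̄C. Assume that (i) for every x ∈ ∂̄C the set ∂̄C \ {x} is connected, and (ii) for all x, y ∈ ∂̄C, d(y − x, T_x ∂̄C) > 0 whenever x ≠ y. Then C is convex. -/

import Mathlib

open Set Metric ENNReal NNReal

noncomputable section

abbrev Euc (D : ℕ) := EuclideanSpace ℝ (Fin D)

/-- The medial axis of a set `S`: ambient points having at least two nearest points on `S`. -/
def medialAxis {D : ℕ} (S : Set (Euc D)) : Set (Euc D) :=
  {z | ∃ x ∈ S, ∃ y ∈ S, x ≠ y ∧ dist z x = Metric.infDist z S ∧ dist z y = Metric.infDist z S}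

/-- The reach of a set: the infimal distance from its medial axis to the set. -/
def reach {D : ℕ} (S : Set (Euc D)) : ℝ≥0∞ :=
  ⨅ z ∈ medialAxis S, EMetric.infEdist z S

/-- Geodesic (intrinsic) distance in `S`: infimum of lengths of continuous paths in `S`
joining `x` to `y` (`∞` if there is none). -/
def geodesicDist {D : ℕ} (S : Set (Euc D)) (x y : Euc D) : ℝ≥0∞ :=
  ⨅ (γ : ℝ → Euc D) (_ : ContinuousOn γ (Set.Icc 0 1))
    (_ : Set.MapsTo γ (Set.Icc 0 1) S) (_ : γ 0 = x) (_ : γ 1 = y),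
    eVariationOn γ (Set.Icc 0 1)

/-- The model space `ℝ^d × {0}^{D-d}` inside `ℝ^D`. -/
def fullModel (D d : ℕ) : Set (Euc D) := {x | ∀ i : Fin D, d ≤ (i : ℕ) → x i = 0}

/-- The model half-space `ℝ^{d-1} × ℝ₊ × {0}^{D-d}` inside `ℝ^D`. -/
def halfModel (D d : ℕ) : Set (Euc D) :=
  {x | (∀ i : Fin D, d ≤ (i : ℕ) → x i = 0) ∧ ∃ i : Fin D, (i : ℕ) + 1 = d ∧ 0 ≤ x i}

/-- `p` is a point of `M` around which `M` is C²-parametrized by the given model set. -/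
def IsChartedPoint {D : ℕ} (model : Set (Euc D)) (M : Set (Euc D)) (p : Euc D) : Prop :=
  ∃ (U V : Set (Euc D)) (Ψ Φ : Euc D → Euc D),
    IsOpen U ∧ IsOpen V ∧ (0 : Euc D) ∈ U ∧ p ∈ V ∧
    ContDiffOn ℝ 2 Ψ U ∧ ContDiffOn ℝ 2 Φ V ∧ Set.BijOn Ψ U V ∧
    (∀ x ∈ U, Φ (Ψ x) = x) ∧ Ψ 0 = p ∧ Ψ '' (U ∩ model) = M ∩ V

/-- `M ⊆ ℝ^D` is a `d`-dimensional C² submanifold with (possibly empty) boundary. -/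
def IsC2SubmanifoldWithBoundary {D : ℕ} (d : ℕ) (M : Set (Euc D)) : Prop :=
  IsClosed M ∧ ∀ p ∈ M, IsChartedPoint (fullModel D d) M p ∨ IsChartedPoint (halfModel D d) M p

/-- The (differential) boundary `∂M` of `M`: points carrying a half-space chart. -/
def boundaryOf {D : ℕ} (d : ℕ) (M : Set (Euc D)) : Set (Euc D) :=
  {p ∈ M | IsChartedPoint (halfModel D d) M p}

/-- The tangent space of `M` at `x`: the linear span of the tangent cone. -/
def tangentSpaceAt {D : ℕ} (M : Set (Euc D)) (x : Euc D) : Submodule ℝ (Euc D) :=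
  Submodule.span ℝ (tangentConeAt ℝ M x)

/-- The normal cone of `M` at `x`: the dual cone of the tangent cone. -/
def normalConeAt {D : ℕ} (M : Set (Euc D)) (x : Euc D) : Set (Euc D) :=
  {v | ∀ u ∈ tangentConeAt ℝ M x, (inner ℝ u v : ℝ) ≤ 0}

/-- Orthogonal projection onto a subspace, as a continuous linear map `E →L[ℝ] E`. -/
def projSub {D : ℕ} (T : Submodule ℝ (Euc D)) : Euc D →L[ℝ] Euc D :=
  T.subtypeL.comp (T.orthogonalProjectionOnto)

/-- Angle between two linear subspaces: operator norm of the difference of projections. -/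
def angleS {D : ℕ} (T T' : Submodule ℝ (Euc D)) : ℝ := ‖projSub T - projSub T'‖

/-- `η` is the unit outward-pointing normal of `M` at `p`:
the unit vector of `Nor(p,M) ∩ T_p M`. -/
def IsOutwardNormalAt {D : ℕ} (M : Set (Euc D)) (p η : Euc D) : Prop :=
  η ∈ normalConeAt M p ∧ η ∈ tangentSpaceAt M p ∧ ‖η‖ = 1

open Filter Topology

/-! At a boundary point `x`, a chart shows that the tangent space contains a hyperplane `ker ℓ`.
By (ii), `ℓ y ≠ ℓ x` for every other boundary point `y`, so by (i) the sign of `ℓ y - ℓ x` is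
constant on `∂C \ {x}`: up to sign, `x` minimises `ℓ` on `∂C`, hence on the compact set `C`, since a
nonzero linear functional has no local minimum. So `C` has a supporting hyperplane at each boundary
point. If some `p ∈ [a, b]` with `a, b ∈ C` lay outside `C`, the segment from an interior point `c`
to `p` would cross `∂C` at some `q`; its supporting functional is larger at `c` than at `q` and not
smaller at `p`, which is absurd. -/

theorem HasFDerivAt.leftInverse_of_comp_eventuallyEq_id {E F : Type*} [NormedAddCommGroup E]
    [NormedSpace ℝ E] [NormedAddCommGroup F] [NormedSpace ℝ F] {f : E → F} {g : F → E}
    {f' : E →L[ℝ] F} {g' : F →L[ℝ] E} {a : E} (hf : HasFDerivAt f f' a)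
    (hg : HasFDerivAt g g' (f a)) (h : g ∘ f =ᶠ[𝓝 a] id) : Function.LeftInverse g' f' := by
  have hcomp : g'.comp f' = ContinuousLinearMap.id ℝ E :=
    (hg.comp a hf).unique ((hasFDerivAt_id a).congr_of_eventuallyEq h)
  exact fun v => congr($hcomp v)

theorem IsChartedPoint.exists_map_le_tangentSpaceAt {D : ℕ} {W : Submodule ℝ (Euc D)}
    {M : Set (Euc D)} {p : Euc D} (h : IsChartedPoint (W : Set (Euc D)) M p) :
    ∃ e : Euc D ≃L[ℝ] Euc D, W.map (e : Euc D →ₗ[ℝ] Euc D) ≤ tangentSpaceAt M p := by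
  obtain ⟨U, V, Ψ, Φ, hU, hV, h0U, hpV, hΨ, hΦ, hbij, hinv, hΨ0, himg⟩ := h
  have hΨd : HasFDerivAt Ψ (fderiv ℝ Ψ 0) 0 :=
    ((hΨ.differentiableOn (by norm_num)).differentiableAt (hU.mem_nhds h0U)).hasFDerivAt
  have hΦd : HasFDerivAt Φ (fderiv ℝ Φ p) p :=
    ((hΦ.differentiableOn (by norm_num)).differentiableAt (hV.mem_nhds hpV)).hasFDerivAt
  have hΦp : Φ p = 0 := hΨ0 ▸ hinv 0 h0U
  have hΦΨ : Φ ∘ Ψ =ᶠ[𝓝 0] id := eventually_of_mem (hU.mem_nhds h0U) hinv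
  have hΨΦ : Ψ ∘ Φ =ᶠ[𝓝 p] id := by
    filter_upwards [hV.mem_nhds hpV] with z hz
    obtain ⟨u, hu, rfl⟩ := hbij.surjOn hz
    simp [hinv u hu]
  refine ⟨.equivOfInverse _ _ (hΨd.leftInverse_of_comp_eventuallyEq_id (hΨ0 ▸ hΦd) hΦΨ)
    (hΦd.leftInverse_of_comp_eventuallyEq_id (hΦp ▸ hΨd) hΨΦ), ?_⟩
  rintro _ ⟨w, hw, rfl⟩
  have hw : w ∈ tangentConeAt ℝ (U ∩ W) 0 := by
    rw [inter_comm, tangentConeAt_inter_nhds (hU.mem_nhds h0U)]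
    simpa using mem_tangentConeAt_of_segment_subset (W.convex.segment_subset W.zero_mem hw)
  have hΨw := hΨd.hasFDerivWithinAt.mapsTo_tangent_cone hw
  rw [himg, hΨ0] at hΨw
  exact Submodule.subset_span (tangentConeAt_mono inter_subset_left hΨw)

theorem fullModel_sub_one_eq_ker {d : ℕ} (i : Fin d) (hi : (i : ℕ) = d - 1) :
    fullModel d (d - 1) = (LinearMap.ker (EuclideanSpace.projₗ (𝕜 := ℝ) i) : Set (Euc d)) := by
  ext x
  simp only [fullModel, mem_ofPred_eq, SetLike.mem_coe, LinearMap.mem_ker]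
  refine ⟨fun h => h i hi.ge, fun h j hj => ?_⟩
  rwa [Fin.ext (show (j : ℕ) = i by omega)]

theorem IsChartedPoint.exists_ker_le_tangentSpaceAt {d : ℕ} (hd : 0 < d) {M : Set (Euc d)}
    {p : Euc d} (h : IsChartedPoint (fullModel d (d - 1)) M p) :
    ∃ ℓ : Euc d →L[ℝ] ℝ, ℓ ≠ 0 ∧ ∀ v, ℓ v = 0 → v ∈ tangentSpaceAt M p := by
  set i : Fin d := ⟨d - 1, by omega⟩
  rw [fullModel_sub_one_eq_ker i rfl] at h
  obtain ⟨e, he⟩ := h.exists_map_le_tangentSpaceAt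
  refine ⟨(EuclideanSpace.proj i).comp (e.symm : Euc d →L[ℝ] Euc d), fun h0 => ?_,
    fun v hv => he ⟨e.symm v, hv, by simp⟩⟩
  simpa using congr($h0 (e (EuclideanSpace.single i 1)))

theorem IsPreconnected.forall_lt_or_forall_gt {X α : Type*} [TopologicalSpace X] [LinearOrder α]
    [TopologicalSpace α] [OrderClosedTopology α] {s : Set X} (hs : IsPreconnected s)
    {f : X → α} (hf : ContinuousOn f s) {c : α} (hc : ∀ y ∈ s, f y ≠ c) :
    (∀ y ∈ s, c < f y) ∨ ∀ y ∈ s, f y < c := by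
  by_contra! ⟨⟨y₁, hy₁, h₁⟩, ⟨y₂, hy₂, h₂⟩⟩
  obtain ⟨y, hy, rfl⟩ := hs.intermediate_value hy₁ hy₂ hf ⟨h₁, h₂⟩
  exact hc y hy rfl

theorem IsPreconnected.inter_frontier_nonempty {X : Type*} [TopologicalSpace X] {s t : Set X}
    (hs : IsPreconnected s) (hst : (s ∩ t).Nonempty) (hst' : (s \ t).Nonempty) :
    (s ∩ frontier t).Nonempty := by
  by_contra! h
  have hsub : s ⊆ interior t ∪ interior tᶜ := by
    rw [← compl_frontier_eq_union_interior]
    exact fun x hxs hxt => (h.subset ⟨hxs, hxt⟩ : x ∈ (∅ : Set X))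
  rcases hs.subset_or_subset isOpen_interior isOpen_interior
    (disjoint_compl_right.mono interior_subset interior_subset) hsub with h' | h'
  · obtain ⟨x, hxs, hxt⟩ := hst'
    exact hxt (interior_subset (h' hxs))
  · obtain ⟨x, hxs, hxt⟩ := hst
    exact interior_subset (h' hxs) hxt

section NormedSpace

variable {E : Type*} [NormedAddCommGroup E] [NormedSpace ℝ E]

theorem ContinuousLinearMap.not_isLocalMin {ℓ : E →L[ℝ] ℝ} (hℓ : ℓ ≠ 0) (x : E) :
    ¬IsLocalMin ℓ x :=
  fun h => hℓ (h.hasFDerivAt_eq_zero ℓ.hasFDerivAt)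

theorem ContinuousLinearMap.lt_apply_of_mem_interior {ℓ : E →L[ℝ] ℝ} (hℓ : ℓ ≠ 0) {C : Set E}
    {a : ℝ} (h : ∀ y ∈ C, a ≤ ℓ y) {x : E} (hx : x ∈ interior C) : a < ℓ x := by
  by_contra! hxa
  refine ℓ.not_isLocalMin hℓ x ?_
  filter_upwards [mem_interior_iff_mem_nhds.1 hx] with y hy
  exact hxa.trans (h y hy)

theorem ContinuousLinearMap.le_apply_of_forall_mem_frontier {ℓ : E →L[ℝ] ℝ} (hℓ : ℓ ≠ 0)
    {C : Set E} (hC : IsCompact C) {a : ℝ} (h : ∀ y ∈ frontier C, a ≤ ℓ y) :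
    ∀ y ∈ C, a ≤ ℓ y := by
  intro y hy
  obtain ⟨x, hxC, hmin⟩ := hC.exists_isMinOn ⟨y, hy⟩ ℓ.continuous.continuousOn
  suffices hx : x ∈ frontier C from (h x hx).trans (hmin hy)
  by_contra hx
  have hx : x ∈ interior C := self_sdiff_frontier C ▸ ⟨hxC, hx⟩
  exact (ℓ.lt_apply_of_mem_interior hℓ (fun z hz => hmin hz) hx).false

theorem exists_forall_apply_le_of_isPreconnected_diff_singleton {S : Set E} {x : E}
    (hS : IsPreconnected (S \ {x})) {ℓ : E →L[ℝ] ℝ} (hℓ : ℓ ≠ 0)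
    (hne : ∀ y ∈ S, y ≠ x → ℓ y ≠ ℓ x) : ∃ ℓ' : E →L[ℝ] ℝ, ℓ' ≠ 0 ∧ ∀ y ∈ S, ℓ' x ≤ ℓ' y := by
  have hsign := hS.forall_lt_or_forall_gt ℓ.continuous.continuousOn fun y hy => hne y hy.1 hy.2
  rcases hsign with hpos | hneg
  · refine ⟨ℓ, hℓ, fun y hy => ?_⟩
    rcases eq_or_ne y x with rfl | hyx
    · exact le_rfl
    · exact (hpos y ⟨hy, hyx⟩).le
  · refine ⟨-ℓ, neg_ne_zero.2 hℓ, fun y hy => ?_⟩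
    rcases eq_or_ne y x with rfl | hyx
    · exact le_rfl
    · simpa using (hneg y ⟨hy, hyx⟩).le

theorem convex_of_forall_mem_frontier_exists_supporting {C : Set E} (hC : IsClosed C)
    (hint : (interior C).Nonempty)
    (hsupp : ∀ x ∈ frontier C, ∃ ℓ : E →L[ℝ] ℝ, ℓ ≠ 0 ∧ ∀ y ∈ C, ℓ x ≤ ℓ y) :
    Convex ℝ C := by
  obtain ⟨c, hc⟩ := hint
  intro a ha b hb s t hs ht hst
  set p := s • a + t • b
  by_contra hp
  obtain ⟨q, ⟨u, v, hu, hv, huv, hq_def⟩, hq⟩ :=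
    (convex_segment c p).isPreconnected.inter_frontier_nonempty
      ⟨c, left_mem_segment ℝ _ _, interior_subset hc⟩ ⟨p, right_mem_segment ℝ _ _, hp⟩
  obtain ⟨ℓ, hℓ, hℓC⟩ := hsupp q hq
  have hℓc : ℓ q < ℓ c := ℓ.lt_apply_of_mem_interior hℓ hℓC hc
  have hℓp : ℓ q ≤ ℓ p := convex_halfSpace_ge ℓ.isLinear _ (hℓC a ha) (hℓC b hb) hs ht hst
  rcases hu.eq_or_lt with rfl | hu
  · rw [zero_add] at huv
    subst huv
    exact hp (by simpa [← hq_def] using hC.frontier_subset hq)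
  · have hℓq : ℓ q = u * ℓ c + v * ℓ p := by simp [← hq_def]
    have hq_split : ℓ q = u * ℓ q + v * ℓ q := by rw [← add_mul, huv, one_mul]
    linarith [mul_lt_mul_of_pos_left hℓc hu, mul_le_mul_of_nonneg_left hℓp hv]

end NormedSpace

theorem stmt_11 {d : ℕ} (C : Set (Euc d)) (hC : IsCompact C)
    (hint : (interior C).Nonempty)
    (hbd : IsC2SubmanifoldWithBoundary (d - 1) (frontier C))
    (hnb : boundaryOf (d - 1) (frontier C) = ∅)
    (hconn : ∀ x ∈ frontier C, IsConnected (frontier C \ {x}))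
    (hsep : ∀ x ∈ frontier C, ∀ y ∈ frontier C, x ≠ y →
      0 < Metric.infDist (y - x) (tangentSpaceAt (frontier C) x : Set (Euc d))) :
    Convex ℝ C := by
  rcases d.eq_zero_or_pos with rfl | hd
  · exact Set.subsingleton_of_subsingleton.convex
  refine convex_of_forall_mem_frontier_exists_supporting hC.isClosed hint fun x hx => ?_
  have hchart : IsChartedPoint (fullModel d (d - 1)) (frontier C) x :=
    (hbd.2 x hx).resolve_right fun h => (hnb ▸ ⟨hx, h⟩ : x ∈ (∅ : Set (Euc d)))
  obtain ⟨ℓ, hℓ, hker⟩ := hchart.exists_ker_le_tangentSpaceAt hd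
  have hne : ∀ y ∈ frontier C, y ≠ x → ℓ y ≠ ℓ x := fun y hy hyx hxy =>
    (hsep x hx y hy hyx.symm).ne' (infDist_zero_of_mem (hker _ (by rw [map_sub, hxy, sub_self])))
  obtain ⟨ℓ', hℓ', hℓ'fr⟩ :=
    exists_forall_apply_le_of_isPreconnected_diff_singleton (hconn x hx).isPreconnected hℓ hne
  exact ⟨ℓ', hℓ', ℓ'.le_apply_of_forall_mem_frontier hℓ' hC hℓ'fr⟩
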